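/- arXiv:1212.4063 — 2 statements merged into one kernel-verified Lean document; each statement's English description precedes it below -/
import Mathlib

section
/- If A is δ-primitive (some maximal ideal of A contains no nonzero δ-ideal), then the Poisson algebra A[z] with bracket {−,−}_δ is Poisson primitive, i.e., some maximal ideal of A[z] contains no nonzero Poisson ideal. -/
open Polynomial

/-- A Poisson bracket on a commutative `ℂ`-algebra `B`. -/
structure IsPoissonBracket {B : Type*} [CommRing B] [Algebra ℂ B]
    (br : B → B → B) : Prop where
  add_left : ∀ a b c : B, br (a + b) c = br a c + br b c
  smul_left : ∀ (r : ℂ) (a b : B), br (r • a) b = r • br a b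
  antisymm : ∀ a b : B, br a b = - br b a
  jacobi : ∀ a b c : B, br a (br b c) + br b (br c a) + br c (br a b) = 0
  leibniz : ∀ a b c : B, br a (b * c) = br a b * c + b * br a c

/-- The Poisson bracket `{-,-}_δ` on `A[z]`: zero on `A` and `{z,a} = δ a`. -/
def IsDeltaBracket {A : Type*} [CommRing A] [Algebra ℂ A] (δ : Derivation ℂ A A)
    (br : Polynomial A → Polynomial A → Polynomial A) : Prop :=
  IsPoissonBracket br ∧ (∀ a b : A, br (Polynomial.C a) (Polynomial.C b) = 0) ∧
    (∀ a : A, br Polynomial.X (Polynomial.C a) = Polynomial.C (δ a))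

/-- `I` is a Poisson ideal for the bracket `br`. -/
def IsPoissonIdeal {B : Type*} [CommRing B] (br : B → B → B) (I : Ideal B) : Prop :=
  ∀ b : B, ∀ i ∈ I, br b i ∈ I

/-- `I` is a `δ`-ideal. -/
def IsDeltaIdeal {A : Type*} [CommRing A] [Algebra ℂ A] (δ : Derivation ℂ A A)
    (I : Ideal A) : Prop :=
  ∀ a ∈ I, δ a ∈ I

/-- `P` is a `δ`-prime ideal. -/
def IsDeltaPrime {A : Type*} [CommRing A] [Algebra ℂ A] (δ : Derivation ℂ A A)
    (P : Ideal A) : Prop :=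
  P ≠ ⊤ ∧ IsDeltaIdeal δ P ∧
    ∀ I J : Ideal A, IsDeltaIdeal δ I → IsDeltaIdeal δ J → I * J ≤ P → I ≤ P ∨ J ≤ P

/-!
Let `M` be a maximal ideal of `A` whose `δ`-core is `0`, and take `N = M + zA[z]`, the kernel of
`A[z] → A/M`, `z ↦ 0`. Since `{a, f} = -δ(a) f'`, a nonzero Poisson ideal `I ⊆ N` is stable under
`f ↦ δ(a) f'`. The annihilator of `δ(A)` is a `δ`-ideal killing the nonzero `δ`-ideal generated by
`δ(A)`, so primality of `M` forces it to vanish; hence an element of `I` of minimal degree has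
`f' = 0` and, in characteristic zero, is a nonzero constant. Then `I ∩ A` is a nonzero `δ`-ideal
inside `M`, a contradiction.
-/

namespace IsPoissonBracket

variable {B : Type*} [CommRing B] [Algebra ℂ B] {br : B → B → B}

theorem add_right (hbr : IsPoissonBracket br) (a b c : B) :
    br a (b + c) = br a b + br a c := by
  rw [hbr.antisymm, hbr.add_left, neg_add, ← hbr.antisymm, ← hbr.antisymm]

end IsPoissonBracket

namespace IsDeltaBracket

variable {A : Type*} [CommRing A] [Algebra ℂ A] {δ : Derivation ℂ A A}
  {br : A[X] → A[X] → A[X]}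

theorem C_left (hbr : IsDeltaBracket δ br) (a : A) (f : A[X]) :
    br (C a) f = -(derivative f * C (δ a)) := by
  obtain ⟨hP, hCC, hXC⟩ := hbr
  induction f using Polynomial.induction_on with
  | C b => simp [hCC]
  | add p q hp hq => rw [hP.add_right, hp, hq, derivative_add]; ring
  | monomial n b ih =>
    rw [pow_succ, ← mul_assoc, hP.leibniz, ih, hP.antisymm _ X, hXC]
    simp only [derivative_mul, derivative_X, derivative_C, derivative_X_pow]
    ring

theorem derivative_mul_C_mem (hbr : IsDeltaBracket δ br) {I : Ideal A[X]}
    (hI : IsPoissonIdeal br I) (a : A) {f : A[X]} (hf : f ∈ I) :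
    derivative f * C (δ a) ∈ I := by
  simpa [hbr.C_left] using I.neg_mem (hI (C a) f hf)

theorem isDeltaIdeal_comap_C (hbr : IsDeltaBracket δ br) {I : Ideal A[X]}
    (hI : IsPoissonIdeal br I) : IsDeltaIdeal δ (I.comap C) := by
  intro a ha
  simpa [Ideal.mem_comap, hbr.2.2] using hI X (C a) ha

end IsDeltaBracket

section DeltaIdeal

variable {A : Type*} [CommRing A] [Algebra ℂ A]

theorem isDeltaIdeal_span_range (δ : Derivation ℂ A A) :
    IsDeltaIdeal δ (Ideal.span (Set.range δ)) := by
  intro x hx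
  induction hx using Submodule.span_induction with
  | mem y hy =>
    obtain ⟨b, rfl⟩ := hy
    exact Ideal.subset_span ⟨δ b, rfl⟩
  | zero => simp
  | add y z _ _ hy hz => rw [map_add]; exact add_mem hy hz
  | smul c y _ hy =>
    rw [smul_eq_mul, Derivation.leibniz, smul_eq_mul, smul_eq_mul]
    exact add_mem (Ideal.mul_mem_left _ _ hy) (Ideal.mul_mem_left _ _ (Ideal.subset_span ⟨c, rfl⟩))

theorem IsDeltaIdeal.annihilator {δ : Derivation ℂ A A} {I : Ideal A} (hI : IsDeltaIdeal δ I) :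
    IsDeltaIdeal δ (Submodule.annihilator I) := by
  intro x hx
  rw [Submodule.mem_annihilator] at hx ⊢
  intro i hi
  have h := congrArg δ (hx i hi)
  rw [smul_eq_mul, Derivation.leibniz, hx (δ i) (hI i hi), zero_add, map_zero] at h
  rw [smul_eq_mul, mul_comm]
  exact h

theorem annihilator_span_range_eq_bot {δ : Derivation ℂ A A} (hδ : δ ≠ 0) {P : Ideal A} (hP : P.IsPrime)
    (hcore : ∀ I : Ideal A, IsDeltaIdeal δ I → I ≠ ⊥ → ¬ I ≤ P) :
    Submodule.annihilator (Ideal.span (Set.range δ)) = ⊥ := by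
  set D := Ideal.span (Set.range δ)
  have hD : D ≠ ⊥ := by
    rw [Ne, Ideal.span_eq_bot, Set.forall_mem_range]
    exact fun h => hδ (Derivation.ext h)
  by_contra hAnn
  have hle : Submodule.annihilator D * D ≤ P := by
    rw [Submodule.annihilator_mul]; exact bot_le
  rcases hP.mul_le.mp hle with h | h
  · exact hcore _ (isDeltaIdeal_span_range δ).annihilator hAnn h
  · exact hcore D (isDeltaIdeal_span_range δ) hD h

end DeltaIdeal

namespace Polynomial

variable {A : Type*} [CommRing A]

theorem eq_zero_of_forall_mul_C_eq_zero {S : Set A}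
    (hS : Submodule.annihilator (Ideal.span S) = ⊥) {p : A[X]} (hp : ∀ s ∈ S, p * C s = 0) :
    p = 0 := by
  ext n
  have hmem : p.coeff n ∈ Submodule.annihilator (Ideal.span S) := by
    rw [Submodule.mem_annihilator_span]
    rintro ⟨s, hs⟩
    simpa using congrArg (coeff · n) (hp s hs)
  simpa [hS] using hmem

theorem comap_C_ne_bot_of_derivative_mul_C_mem [IsAddTorsionFree A] {S : Set A}
    (hS : Submodule.annihilator (Ideal.span S) = ⊥) {I : Ideal A[X]}
    (hI : ∀ s ∈ S, ∀ f ∈ I, derivative f * C s ∈ I) (hI0 : I ≠ ⊥) :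
    I.comap C ≠ ⊥ := by
  obtain ⟨f, hfI, hf0⟩ := Submodule.exists_mem_ne_zero_of_ne_bot hI0
  induction hn : f.natDegree using Nat.strong_induction_on generalizing f with
  | _ n ih =>
  by_cases hder : derivative f = 0
  · have hfC := eq_C_of_natDegree_eq_zero (derivative_eq_zero.mp hder)
    refine fun hbot => hf0 ?_
    have hcoeff : f.coeff 0 ∈ I.comap C := by rw [Ideal.mem_comap, ← hfC]; exact hfI
    rw [hbot, Ideal.mem_bot] at hcoeff
    rw [hfC, hcoeff, map_zero]
  · obtain ⟨s, hs, hne⟩ : ∃ s ∈ S, derivative f * C s ≠ 0 := by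
      by_contra! h
      exact hder (eq_zero_of_forall_mul_C_eq_zero hS h)
    have hdeg : f.natDegree ≠ 0 := fun h => hder (derivative_of_natDegree_zero h)
    refine ih _ ?_ _ (hI s hs f hfI) hne rfl
    exact hn ▸ (natDegree_mul_C_le _ _).trans_lt (natDegree_derivative_lt hdeg)

end Polynomial

theorem stmt_12 {A : Type*} [CommRing A] [Algebra ℂ A]
    (δ : Derivation ℂ A A) (hδ : δ ≠ 0)
    (br : Polynomial A → Polynomial A → Polynomial A) (hbr : IsDeltaBracket δ br)
    (hprim : ∃ M : Ideal A, M.IsMaximal ∧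
      ∀ I : Ideal A, IsDeltaIdeal δ I → I ≠ ⊥ → ¬ I ≤ M) :
    ∃ N : Ideal (Polynomial A), N.IsMaximal ∧
      ∀ I : Ideal (Polynomial A), IsPoissonIdeal br I → I ≠ ⊥ → ¬ I ≤ N := by
  have : IsAddTorsionFree A := .of_isTorsionFree ℂ A
  obtain ⟨M, hM, hcore⟩ := hprim
  have hAnn := annihilator_span_range_eq_bot hδ hM.isPrime hcore
  refine ⟨M.comap (evalRingHom 0),
    Ideal.comap_isMaximal_of_surjective _ fun a => ⟨C a, eval_C⟩, ?_⟩
  intro I hI hI0 hIN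
  have hI' : ∀ s ∈ Set.range δ, ∀ f ∈ I, derivative f * C s ∈ I := by
    rintro _ ⟨a, rfl⟩ f hf
    exact hbr.derivative_mul_C_mem hI a hf
  refine hcore _ (hbr.isDeltaIdeal_comap_C hI)
    (comap_C_ne_bot_of_derivative_mul_C_mem hAnn hI' hI0) fun a ha => ?_
  simpa using hIN ha
end

section
/- Let δ be the derivation of A = C[x,y] with δ(x) = x and δ(y) = 1. Then the only nonzero δ-prime ideal of A is xA; hence the Poisson prime spectrum of C[x,y,z] with bracket {y,z}=−1, {z,x}=x, {x,y}=0 is exactly {0, xC[x,y,z]}. -/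
open Polynomial

/-!
Write `ℂ[x,y] = ℂ[y][x]`. On the coefficient of `xⁿ`, `δ - μ` acts as `c ↦ c' + (n - μ) c`:
nilpotent for `μ = n`, injective otherwise. Applying suitable powers of `δ - μ` to an element of
a `δ`-ideal kills its `x`-coefficients one at a time, so a `δ`-ideal contains `xⁱ` for every
`x`-exponent `i` occurring in any of its elements. A proper `δ`-ideal therefore lies in `(x)`,
and a nonzero `δ`-prime contains some `(x)ⁱ`, hence `(x)`.

For the Poisson part, `{y, -} = -∂_z`, and in characteristic zero a `∂_z`-stable ideal of `A[z]`
is extended from its contraction to `A`; since `{z, a} = δ a`, the Poisson primes are exactly the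
extensions of the prime `δ`-ideals.
-/
section DerivativeStableIdeal

variable {R : Type*} [CommRing R]

theorem coeff_succ_mem_of_derivative_mem_map_C (K : Type*) [Field K] [CharZero K] [Algebra K R]
    {I : Ideal R} {f : R[X]} (h : derivative f ∈ I.map C) (n : ℕ) : f.coeff (n + 1) ∈ I := by
  have hunit : IsUnit ((n + 1 : ℕ) : R) := by
    simpa using
      (IsUnit.mk0 ((n + 1 : ℕ) : K) (Nat.cast_ne_zero.mpr n.succ_ne_zero)).map (algebraMap K R)
  have h' := Ideal.mem_map_C_iff.mp h n
  rw [coeff_derivative] at h'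
  exact (Ideal.mul_unit_mem_iff_mem I (by exact_mod_cast hunit)).mp h'

theorem mem_map_C_comap_C_of_derivative_mem (K : Type*) [Field K] [CharZero K] [Algebra K R]
    {Q : Ideal R[X]} {f : R[X]} (hf : f ∈ Q) (h : derivative f ∈ (Q.comap C).map C) :
    f ∈ (Q.comap C).map C := by
  have hdivX : f.divX ∈ (Q.comap C).map C := Ideal.mem_map_C_iff.mpr fun n => by
    rw [coeff_divX]
    exact coeff_succ_mem_of_derivative_mem_map_C K h n
  have hconst : C (f.coeff 0) ∈ Q := by
    have hsplit : C (f.coeff 0) = f - X * f.divX := by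
      rw [eq_sub_iff_add_eq, add_comm, X_mul_divX_add]
    rw [hsplit]
    exact Q.sub_mem hf (Q.mul_mem_left X (Ideal.map_comap_le hdivX))
  rw [← X_mul_divX_add f]
  exact add_mem (Ideal.mul_mem_left _ _ hdivX) (Ideal.mem_map_of_mem _ hconst)

theorem Ideal.map_C_comap_C_eq_of_derivative_mem (K : Type*) [Field K] [CharZero K] [Algebra K R]
    {Q : Ideal R[X]} (hQ : ∀ f ∈ Q, derivative f ∈ Q) : (Q.comap C).map C = Q := by
  refine le_antisymm Ideal.map_comap_le fun f hf => ?_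
  induction hn : f.natDegree using Nat.strong_induction_on generalizing f with
  | _ n ih =>
    refine mem_map_C_comap_C_of_derivative_mem K hf ?_
    rcases Nat.eq_zero_or_pos n with rfl | hpos
    · rw [derivative_of_natDegree_zero hn]
      exact zero_mem _
    · exact ih _ (hn ▸ natDegree_derivative_lt (by omega)) _ (hQ f hf) rfl

theorem Ideal.eq_bot_or_eq_top_of_derivative_mem {K : Type*} [Field K] [CharZero K]
    {Q : Ideal K[X]} (hQ : ∀ f ∈ Q, derivative f ∈ Q) : Q = ⊥ ∨ Q = ⊤ := by
  rw [← Ideal.map_C_comap_C_eq_of_derivative_mem K hQ]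
  rcases (Q.comap C).eq_bot_or_top with h | h
  · exact .inl (by rw [h, Ideal.map_bot])
  · exact .inr (by rw [h, Ideal.map_top])

end DerivativeStableIdeal

section DeltaIdeal

variable {A : Type*} [CommRing A] [Algebra ℂ A] {δ : Derivation ℂ A A}

theorem IsDeltaIdeal.mul {I J : Ideal A} (hI : IsDeltaIdeal δ I) (hJ : IsDeltaIdeal δ J) :
    IsDeltaIdeal δ (I * J) := by
  intro a ha
  refine Submodule.mul_induction_on ha (fun m hm n hn => ?_) fun _ _ => by
    rw [map_add]
    exact add_mem
  rw [Derivation.leibniz, smul_eq_mul, smul_eq_mul, mul_comm n]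
  exact add_mem (Ideal.mul_mem_mul hm (hJ n hn)) (Ideal.mul_mem_mul (hI m hm) hn)

theorem IsDeltaIdeal.pow {I : Ideal A} (hI : IsDeltaIdeal δ I) (n : ℕ) :
    IsDeltaIdeal δ (I ^ n) := by
  induction n with
  | zero => simp [IsDeltaIdeal]
  | succ n ih => rw [pow_succ]; exact ih.mul hI

theorem IsDeltaPrime.le_of_pow_le {P I : Ideal A} (hP : IsDeltaPrime δ P)
    (hI : IsDeltaIdeal δ I) (n : ℕ) (h : I ^ n ≤ P) : I ≤ P := by
  induction n with
  | zero => exact absurd (top_le_iff.mp (by simpa using h)) hP.1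
  | succ n ih =>
    rw [pow_succ] at h
    exact (hP.2.2 _ _ (hI.pow n) hI h).elim ih id

theorem Ideal.IsPrime.isDeltaPrime {P : Ideal A} (hP : P.IsPrime) (hδ : IsDeltaIdeal δ P) :
    IsDeltaPrime δ P :=
  ⟨hP.ne_top, hδ, fun _ _ _ _ h => hP.mul_le.mp h⟩

end DeltaIdeal

section DeltaBracket

theorem IsPoissonBracket.add_right_s19 {B : Type*} [CommRing B] [Algebra ℂ B] {br : B → B → B}
    (hbr : IsPoissonBracket br) (a b c : B) : br a (b + c) = br a b + br a c := by
  rw [hbr.antisymm, hbr.add_left, neg_add, ← hbr.antisymm, ← hbr.antisymm]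

theorem IsPoissonBracket.zero_right {B : Type*} [CommRing B] [Algebra ℂ B] {br : B → B → B}
    (hbr : IsPoissonBracket br) (a : B) : br a 0 = 0 := by
  simpa using hbr.leibniz a 0 0

variable {A : Type*} [CommRing A] [Algebra ℂ A] {δ : Derivation ℂ A A}
  {br : A[X] → A[X] → A[X]}

theorem IsDeltaBracket.C_left_s19 (hbr : IsDeltaBracket δ br) (a : A) (f : A[X]) :
    br (C a) f = -(C (δ a) * derivative f) := by
  induction f using Polynomial.induction_on with
  | C b => rw [hbr.2.1, derivative_C, mul_zero, neg_zero]
  | add p q hp hq => rw [hbr.1.add_right_s19, hp, hq, derivative_add, mul_add, neg_add]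
  | monomial n b ih =>
    rw [pow_succ, ← mul_assoc, hbr.1.leibniz, ih, hbr.1.antisymm (C a) X, hbr.2.2]
    simp only [derivative_mul, derivative_X, derivative_C]
    ring

theorem IsDeltaBracket.C_right (hbr : IsDeltaBracket δ br) (a : A) (f : A[X]) :
    br f (C a) = C (δ a) * derivative f := by
  rw [hbr.1.antisymm, hbr.C_left_s19, neg_neg]

theorem IsPoissonIdeal.derivative_mem (hbr : IsDeltaBracket δ br) {Q : Ideal A[X]}
    (hQ : IsPoissonIdeal br Q) {a : A} (ha : δ a = 1) {f : A[X]} (hf : f ∈ Q) :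
    derivative f ∈ Q := by
  have h := Q.neg_mem (hQ (C a) f hf)
  rwa [hbr.C_left_s19, ha, map_one, one_mul, neg_neg] at h

theorem IsPoissonIdeal.isDeltaIdeal_comap_C (hbr : IsDeltaBracket δ br) {Q : Ideal A[X]}
    (hQ : IsPoissonIdeal br Q) : IsDeltaIdeal δ (Q.comap C) := fun a ha => by
  have h := hQ X (C a) ha
  rwa [hbr.2.2] at h

theorem IsDeltaIdeal.isPoissonIdeal_map_C (hbr : IsDeltaBracket δ br) {I : Ideal A}
    (hI : IsDeltaIdeal δ I) : IsPoissonIdeal br (I.map C) := by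
  intro b f hf
  induction hf using Submodule.span_induction with
  | mem f hf =>
    obtain ⟨a, ha, rfl⟩ := hf
    rw [hbr.C_right]
    exact Ideal.mul_mem_right _ _ (Ideal.mem_map_of_mem C (hI a ha))
  | zero => rw [hbr.1.zero_right]; exact zero_mem _
  | add f g _ _ hf hg => rw [hbr.1.add_right_s19]; exact add_mem hf hg
  | smul r f hf' hf =>
    rw [smul_eq_mul, hbr.1.leibniz]
    exact add_mem (Ideal.mul_mem_left _ _ hf') (Ideal.mul_mem_left _ _ hf)

theorem isPrime_and_isPoissonIdeal_iff (hbr : IsDeltaBracket δ br) {a : A} (ha : δ a = 1)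
    (Q : Ideal A[X]) :
    Q.IsPrime ∧ IsPoissonIdeal br Q ↔
      ∃ P : Ideal A, (P.IsPrime ∧ IsDeltaIdeal δ P) ∧ P.map C = Q := by
  constructor
  · rintro ⟨hQ, hQbr⟩
    exact ⟨Q.comap C, ⟨Ideal.IsPrime.comap C, hQbr.isDeltaIdeal_comap_C hbr⟩,
      Ideal.map_C_comap_C_eq_of_derivative_mem ℂ fun f hf => hQbr.derivative_mem hbr ha hf⟩
  · rintro ⟨P, ⟨hP, hδ⟩, rfl⟩
    exact ⟨Ideal.isPrime_map_C_of_isPrime, hδ.isPoissonIdeal_map_C hbr⟩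

end DeltaBracket

section XYDerivation

variable {K : Type*} [Field K]

noncomputable def derivativeCoeffs : Derivation K K[X][X] K[X][X] :=
  PolynomialModule.equivPolynomialSelf.compDer (derivative' : Derivation K K[X] K[X]).mapCoeffs

theorem coeff_derivativeCoeffs (f : K[X][X]) (n : ℕ) :
    (derivativeCoeffs f).coeff n = derivative (f.coeff n) :=
  rfl

/-- Reading `K[X][X]` as `K[y][x]`, this is `x ∂/∂x + ∂/∂y`. -/
noncomputable def xyDerivation : Derivation K K[X][X] K[X][X] :=
  (X : K[X][X]) • (derivative' : Derivation K[X] K[X][X] K[X][X]).restrictScalars K +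
    derivativeCoeffs

theorem coeff_xyDerivation (f : K[X][X]) (n : ℕ) :
    (xyDerivation f).coeff n = derivative (f.coeff n) + (n : K) • f.coeff n := by
  rcases n with _ | n
  · simp [xyDerivation, coeff_derivativeCoeffs]
  · simp [xyDerivation, coeff_derivativeCoeffs, coeff_X_mul, coeff_derivative]
    rw [smul_eq_C_mul, map_add, map_natCast, map_one]
    ring

theorem xyDerivation_X : xyDerivation (X : K[X][X]) = X := by
  simp [xyDerivation, derivativeCoeffs]

theorem xyDerivation_C_X : xyDerivation (C X : K[X][X]) = 1 := by
  ext n : 1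
  rw [coeff_xyDerivation]
  rcases n with _ | n <;> simp [coeff_C, coeff_one]

noncomputable def derivAddSMul (μ : K) (c : K[X]) : K[X] :=
  derivative c + μ • c

theorem derivAddSMul_ne_zero {μ : K} (hμ : μ ≠ 0) {c : K[X]} (hc : c ≠ 0) :
    derivAddSMul μ c ≠ 0 := by
  intro h
  have h' := congrArg (coeff · c.natDegree) h
  simp [derivAddSMul, coeff_derivative, coeff_natDegree_succ_eq_zero, hμ, hc] at h'

theorem iterate_derivAddSMul_ne_zero {μ : K} (hμ : μ ≠ 0) {c : K[X]} (hc : c ≠ 0) (N : ℕ) :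
    (derivAddSMul μ)^[N] c ≠ 0 := by
  induction N generalizing c with
  | zero => exact hc
  | succ N ih => exact ih (derivAddSMul_ne_zero hμ hc)

theorem iterate_derivAddSMul_zero_eq_zero {c : K[X]} {N : ℕ} (hN : c.natDegree < N) :
    (derivAddSMul (0 : K))^[N] c = 0 := by
  have h : derivAddSMul (0 : K) = derivative := funext fun c => by simp [derivAddSMul]
  rw [h]
  exact iterate_derivative_eq_zero hN

noncomputable def xyDerivationSubSMul (μ : K) (f : K[X][X]) : K[X][X] :=
  xyDerivation f - μ • f

theorem coeff_iterate_xyDerivationSubSMul (μ : K) (N : ℕ) (f : K[X][X]) (n : ℕ) :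
    ((xyDerivationSubSMul μ)^[N] f).coeff n = (derivAddSMul ((n : K) - μ))^[N] (f.coeff n) := by
  induction N generalizing f with
  | zero => rfl
  | succ N ih =>
    rw [Function.iterate_succ_apply, Function.iterate_succ_apply, ih]
    congr 1
    simp only [xyDerivationSubSMul, coeff_sub, coeff_smul, coeff_xyDerivation, derivAddSMul,
      sub_smul]
    abel

theorem iterate_xyDerivationSubSMul_mem {Q : Ideal K[X][X]}
    (hQ : ∀ f ∈ Q, xyDerivation f ∈ Q) (μ : K) (N : ℕ) {f : K[X][X]} (hf : f ∈ Q) :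
    (xyDerivationSubSMul μ)^[N] f ∈ Q := by
  induction N generalizing f with
  | zero => exact hf
  | succ N ih => exact ih (Q.sub_mem (hQ f hf) (Q.smul_of_tower_mem μ hf))

theorem X_pow_mem_of_C_mul_X_pow_mem [CharZero K] {Q : Ideal K[X][X]}
    (hQ : ∀ f ∈ Q, xyDerivation f ∈ Q) {c : K[X]} (hc : c ≠ 0) {i : ℕ}
    (h : C c * X ^ i ∈ Q) :
    (X ^ i : K[X][X]) ∈ Q := by
  set J : Ideal K[X] := (Q.colon {X ^ i}).comap C
  have hmemJ : ∀ c, c ∈ J ↔ C c * X ^ i ∈ Q := fun c => by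
    simp [J, Submodule.mem_colon_singleton]
  have hJ : ∀ c ∈ J, derivative c ∈ J := by
    intro c hc
    rw [hmemJ] at hc ⊢
    convert iterate_xyDerivationSubSMul_mem hQ (i : K) 1 hc using 1
    ext n : 1
    rw [coeff_iterate_xyDerivationSubSMul]
    simp only [coeff_C_mul_X_pow]
    split_ifs with hn <;> simp [hn, derivAddSMul]
  have hJtop : J = ⊤ := (Ideal.eq_bot_or_eq_top_of_derivative_mem hJ).resolve_left fun hbot =>
    hc (by simpa [hbot] using (hmemJ c).mpr h)
  simpa using (hmemJ 1).mp (hJtop ▸ Submodule.mem_top)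

theorem X_pow_mem_of_coeff_ne_zero [CharZero K] {Q : Ideal K[X][X]}
    (hQ : ∀ f ∈ Q, xyDerivation f ∈ Q) {f : K[X][X]} (hf : f ∈ Q) {i : ℕ}
    (hi : f.coeff i ≠ 0) :
    (X ^ i : K[X][X]) ∈ Q := by
  induction hcard : f.support.card using Nat.strong_induction_on generalizing f with
  | _ m ih =>
    by_cases hmono : f.support.card ≤ 1
    · obtain ⟨k, c, hc, rfl⟩ := card_support_eq_one.mp
        (le_antisymm hmono (Finset.card_pos.mpr ⟨i, mem_support_iff.mpr hi⟩))
      obtain rfl : k = i := by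
        by_contra hk
        simp [Ne.symm hk] at hi
      exact X_pow_mem_of_C_mul_X_pow_mem hQ hc hf
    · obtain ⟨j, hj, hji⟩ := Finset.exists_mem_ne (s := f.support) (by omega) i
      set g := (xyDerivationSubSMul (j : K))^[(f.coeff j).natDegree + 1] f
      have hgi : g.coeff i ≠ 0 := by
        rw [coeff_iterate_xyDerivationSubSMul]
        exact iterate_derivAddSMul_ne_zero (sub_ne_zero.mpr (Nat.cast_injective.ne hji.symm)) hi _
      have hsub : g.support ⊂ f.support := by
        refine (Finset.ssubset_iff_of_subset fun n hn => ?_).mpr ⟨j, hj, ?_⟩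
        · rw [mem_support_iff] at hn ⊢
          contrapose! hn
          rw [coeff_iterate_xyDerivationSubSMul, hn]
          exact Function.iterate_fixed (by simp [derivAddSMul]) _
        · rw [mem_support_iff, not_not, coeff_iterate_xyDerivationSubSMul, sub_self]
          exact iterate_derivAddSMul_zero_eq_zero (Nat.lt_succ_self _)
      exact ih _ (hcard ▸ Finset.card_lt_card hsub) (iterate_xyDerivationSubSMul_mem hQ _ _ hf)
        hgi rfl

end XYDerivation

section FinTwo

noncomputable def mvPolynomialFinTwoEquiv (R : Type*) [CommSemiring R] :
    MvPolynomial (Fin 2) R ≃ₐ[R] R[X][X] :=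
  (MvPolynomial.renameEquiv R (Equiv.swap 0 1)).trans (Bivariate.equivMvPolynomial R).symm

variable {R : Type*} [CommSemiring R]

theorem mvPolynomialFinTwoEquiv_X_zero : mvPolynomialFinTwoEquiv R (MvPolynomial.X 0) = X := by
  simp [mvPolynomialFinTwoEquiv]

theorem mvPolynomialFinTwoEquiv_X_one : mvPolynomialFinTwoEquiv R (MvPolynomial.X 1) = C X := by
  simp [mvPolynomialFinTwoEquiv]

end FinTwo

section DeltaPrimes

variable {δ : Derivation ℂ (MvPolynomial (Fin 2) ℂ) (MvPolynomial (Fin 2) ℂ)}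

theorem mvPolynomialFinTwoEquiv_derivation (hx : δ (MvPolynomial.X 0) = MvPolynomial.X 0)
    (hy : δ (MvPolynomial.X 1) = 1) (p : MvPolynomial (Fin 2) ℂ) :
    mvPolynomialFinTwoEquiv ℂ (δ p) = xyDerivation (mvPolynomialFinTwoEquiv ℂ p) := by
  induction p using MvPolynomial.induction_on with
  | C r =>
    rw [← MvPolynomial.algebraMap_eq, δ.map_algebraMap, map_zero, AlgEquiv.commutes,
      xyDerivation.map_algebraMap]
  | add p q hp hq => rw [map_add, map_add, hp, hq, map_add, map_add]
  | mul_X p k hp =>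
    have hk : mvPolynomialFinTwoEquiv ℂ (δ (MvPolynomial.X k)) =
        xyDerivation (mvPolynomialFinTwoEquiv ℂ (MvPolynomial.X k)) := by
      fin_cases k
      · simp [hx, mvPolynomialFinTwoEquiv_X_zero, xyDerivation_X]
      · simp [hy, mvPolynomialFinTwoEquiv_X_one, xyDerivation_C_X]
    rw [Derivation.leibniz, map_mul, Derivation.leibniz, map_add, smul_eq_mul, smul_eq_mul,
      smul_eq_mul, smul_eq_mul, map_mul, map_mul, hp, hk]

theorem isDeltaIdeal_span_X_zero (hx : δ (MvPolynomial.X 0) = MvPolynomial.X 0) :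
    IsDeltaIdeal δ (Ideal.span {MvPolynomial.X 0}) := by
  intro a ha
  obtain ⟨b, rfl⟩ := Ideal.mem_span_singleton.mp ha
  rw [Derivation.leibniz, smul_eq_mul, smul_eq_mul, hx]
  exact add_mem (Ideal.mul_mem_right _ _ (Ideal.mem_span_singleton_self _))
    (Ideal.mul_mem_left _ _ (Ideal.mem_span_singleton_self _))

theorem isPrime_span_X_zero :
    (Ideal.span {MvPolynomial.X 0} : Ideal (MvPolynomial (Fin 2) ℂ)).IsPrime :=
  (Ideal.span_singleton_prime (MvPolynomial.X_ne_zero _)).mpr MvPolynomial.X_prime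

theorem isDeltaPrime_and_ne_bot_iff (hx : δ (MvPolynomial.X 0) = MvPolynomial.X 0)
    (hy : δ (MvPolynomial.X 1) = 1) (P : Ideal (MvPolynomial (Fin 2) ℂ)) :
    IsDeltaPrime δ P ∧ P ≠ ⊥ ↔ P = Ideal.span {MvPolynomial.X 0} := by
  constructor
  · rintro ⟨hP, hne⟩
    set e := mvPolynomialFinTwoEquiv ℂ
    set Q := P.comap e.symm
    have hmemQ : ∀ p, e p ∈ Q ↔ p ∈ P := fun p => by simp [Q]
    have hQ : ∀ f ∈ Q, xyDerivation f ∈ Q := fun f hf => by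
      rw [← e.apply_symm_apply f, ← mvPolynomialFinTwoEquiv_derivation hx hy, hmemQ]
      exact hP.2.1 _ ((hmemQ _).mp (by rwa [e.apply_symm_apply]))
    have hX_pow : ∀ p ∈ P, ∀ i, (e p).coeff i ≠ 0 → MvPolynomial.X 0 ^ i ∈ P :=
      fun p hp i hi => by
        rw [← hmemQ, map_pow, mvPolynomialFinTwoEquiv_X_zero]
        exact X_pow_mem_of_coeff_ne_zero hQ ((hmemQ p).mpr hp) hi
    refine le_antisymm (fun p hp => ?_) ?_
    · have hcoeff : (e p).coeff 0 = 0 := by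
        by_contra h
        exact hP.1 (P.eq_top_of_isUnit_mem (by simpa using hX_pow p hp 0 h) isUnit_one)
      rw [Ideal.mem_span_singleton, ← map_dvd_iff e, mvPolynomialFinTwoEquiv_X_zero]
      exact X_dvd_iff.mpr hcoeff
    · obtain ⟨p, hp, hp0⟩ := Submodule.exists_mem_ne_zero_of_ne_bot hne
      obtain ⟨i, hi⟩ : ∃ i, (e p).coeff i ≠ 0 := by
        by_contra! h
        exact hp0 (e.injective (by ext i : 1; simp [h]))
      refine hP.le_of_pow_le (isDeltaIdeal_span_X_zero hx) i ?_
      rw [Ideal.span_singleton_pow, Ideal.span_singleton_le_iff_mem]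
      exact hX_pow p hp i hi
  · rintro rfl
    exact ⟨isPrime_span_X_zero.isDeltaPrime (isDeltaIdeal_span_X_zero hx), by simp⟩

theorem isPrime_and_isDeltaIdeal_iff (hx : δ (MvPolynomial.X 0) = MvPolynomial.X 0)
    (hy : δ (MvPolynomial.X 1) = 1) (P : Ideal (MvPolynomial (Fin 2) ℂ)) :
    P.IsPrime ∧ IsDeltaIdeal δ P ↔ P = ⊥ ∨ P = Ideal.span {MvPolynomial.X 0} := by
  constructor
  · rintro ⟨hP, hδ⟩
    by_cases hbot : P = ⊥
    · exact .inl hbot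
    · exact .inr ((isDeltaPrime_and_ne_bot_iff hx hy P).mp ⟨hP.isDeltaPrime hδ, hbot⟩)
  · rintro (rfl | rfl)
    · exact ⟨Ideal.isPrime_bot, fun a ha => by simp [(Submodule.mem_bot _).mp ha]⟩
    · exact ⟨isPrime_span_X_zero, isDeltaIdeal_span_X_zero hx⟩

end DeltaPrimes

theorem stmt_19
    (δ : Derivation ℂ (MvPolynomial (Fin 2) ℂ) (MvPolynomial (Fin 2) ℂ))
    (hx : δ (MvPolynomial.X 0) = MvPolynomial.X 0) (hy : δ (MvPolynomial.X 1) = 1)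
    (br : Polynomial (MvPolynomial (Fin 2) ℂ) → Polynomial (MvPolynomial (Fin 2) ℂ) →
      Polynomial (MvPolynomial (Fin 2) ℂ))
    (hbr : IsDeltaBracket δ br) :
    (∀ P : Ideal (MvPolynomial (Fin 2) ℂ),
        (IsDeltaPrime δ P ∧ P ≠ ⊥) ↔ P = Ideal.span {MvPolynomial.X 0}) ∧
      {P : Ideal (Polynomial (MvPolynomial (Fin 2) ℂ)) | P.IsPrime ∧ IsPoissonIdeal br P} =
        {⊥, (Ideal.span {MvPolynomial.X 0}).map
          (Polynomial.C : MvPolynomial (Fin 2) ℂ →+* Polynomial (MvPolynomial (Fin 2) ℂ))} := by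
  refine ⟨isDeltaPrime_and_ne_bot_iff hx hy, Set.ext fun Q => ?_⟩
  simp only [Set.mem_ofPred_eq, isPrime_and_isPoissonIdeal_iff hbr hy,
    isPrime_and_isDeltaIdeal_iff hx hy, Set.mem_insert_iff, Set.mem_singleton_iff]
  constructor
  · rintro ⟨P, rfl | rfl, rfl⟩
    · exact .inl Ideal.map_bot
    · exact .inr rfl
  · rintro (rfl | rfl)
    · exact ⟨⊥, .inl rfl, Ideal.map_bot⟩
    · exact ⟨_, .inr rfl, rfl⟩
end
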